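/- arXiv:2007.12884 — 4 statements merged into one kernel-verified Lean document; each statement's English description precedes it below -/
import Mathlib

section
/- For the special relativistic hydrodynamics entropy variables, the entropy potential satisfies φ := V^T U − η = ρW, where V = η'(U)^T, η = −ρWs/(Γ−1), s = ln(p/ρ^Γ), U = (D, m, E)^T with D = ρW, m = ρhW²v, E = ρhW² − p, h = 1 + Γp/((Γ−1)ρ), and W = 1/√(1−|v|²). -/
/-!
In `V·U − η` the entropy `s` cancels between the first and last terms. Pairing the
momentum and energy entries leaves `−(ρ W / p) · ρ h · W² (1 − |v|²) + ρ W`, and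
`W² (1 − |v|²) = 1`. What remains is `ρ W (Γ/(Γ−1) + ρ/p − ρ h/p + 1)`, and the ideal-gas
enthalpy `ρ h = ρ + Γ p/(Γ−1)` makes the bracket equal to `1`.
-/

open Finset

theorem one_div_sqrt_one_sub_sq_mul {q : ℝ} (hq : q < 1) :
    (1 / √(1 - q)) ^ 2 * (1 - q) = 1 := by
  have hpos : 0 < 1 - q := sub_pos.mpr hq
  rw [div_pow, Real.sq_sqrt hpos.le]
  field_simp

theorem mul_one_add_div_mul_sub_one {ρ p Γ : ℝ} (hρ : ρ ≠ 0) :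
    ρ * (1 + Γ * p / ((Γ - 1) * ρ)) = ρ + Γ * p / (Γ - 1) := by
  rw [mul_add, mul_one, mul_div_assoc', mul_comm (Γ - 1) ρ, mul_div_mul_left _ _ hρ]

theorem entropy_potential_eq {ρ p Γ W q h s : ℝ} (hp : p ≠ 0) (hΓ : Γ ≠ 1)
    (hW : W ^ 2 * (1 - q) = 1) (hh : ρ * h = ρ + Γ * p / (Γ - 1)) :
    ((Γ - s) / (Γ - 1) + ρ / p) * (ρ * W) + ρ * W / p * (ρ * h * W ^ 2) * q
      + (-(ρ * W) / p) * (ρ * h * W ^ 2 - p) - -(ρ * W * s) / (Γ - 1) = ρ * W := by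
  have hΓ' : Γ - 1 ≠ 0 := sub_ne_zero.mpr hΓ
  field_simp at hh ⊢
  linear_combination (-(ρ * W * (ρ * h) * (Γ - 1))) * hW - ρ * W * hh

theorem rhd_entropy_potential_general (d : ℕ) (ρ p Γ : ℝ) (v : Fin d → ℝ)
    (hρ : 0 < ρ) (hp : 0 < p) (hv : ∑ i, v i ^ 2 < 1)
    (hΓ1 : 1 < Γ) :
    let W : ℝ := 1 / Real.sqrt (1 - ∑ i, v i ^ 2)
    let h : ℝ := 1 + Γ * p / ((Γ - 1) * ρ)
    let s : ℝ := Real.log (p / ρ ^ Γ)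
    let D : ℝ := ρ * W
    let m : Fin d → ℝ := fun i => ρ * h * W ^ 2 * v i
    let E : ℝ := ρ * h * W ^ 2 - p
    let η : ℝ := -(ρ * W * s) / (Γ - 1)
    ((Γ - s) / (Γ - 1) + ρ / p) * D + (∑ i, (ρ * W * v i / p) * m i)
      + (-(ρ * W) / p) * E - η = ρ * W := by
  intro W h s D m E η
  have hmomentum : ∑ i, (ρ * W * v i / p) * m i
      = ρ * W / p * (ρ * h * W ^ 2) * ∑ i, v i ^ 2 := by
    rw [mul_sum]
    exact sum_congr rfl fun i _ => by ring
  rw [hmomentum]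
  exact entropy_potential_eq hp.ne' hΓ1.ne' (one_div_sqrt_one_sub_sq_mul hv)
    (mul_one_add_div_mul_sub_one hρ.ne')

/-- Entropy potential of special RHD: φ := V·U − η = ρW. -/
theorem rhd_entropy_potential (d : ℕ) (ρ p Γ : ℝ) (v : Fin d → ℝ)
    (hρ : 0 < ρ) (hp : 0 < p) (hv : ∑ i, v i ^ 2 < 1)
    (hΓ1 : 1 < Γ) (hΓ2 : Γ ≤ 2) :
    let W : ℝ := 1 / Real.sqrt (1 - ∑ i, v i ^ 2)
    let h : ℝ := 1 + Γ * p / ((Γ - 1) * ρ)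
    let s : ℝ := Real.log (p / ρ ^ Γ)
    let D : ℝ := ρ * W
    let m : Fin d → ℝ := fun i => ρ * h * W ^ 2 * v i
    let E : ℝ := ρ * h * W ^ 2 - p
    let η : ℝ := -(ρ * W * s) / (Γ - 1)
    ((Γ - s) / (Γ - 1) + ρ / p) * D + (∑ i, (ρ * W * v i / p) * m i)
      + (-(ρ * W) / p) * E - η = ρ * W :=
  rhd_entropy_potential_general d ρ p Γ v hρ hp hv hΓ1
end

section
/- If for each interface the jump of the entropy variables dotted with a symmetric two-point numerical flux equals the metric-weighted jumps of the entropy potentials (the entropy conservation condition), then the semi-discrete finite volume scheme with central differences satisfies a discrete entropy identity d/dt(J_i η_i) + Σ_k (1/Δξ_k) δ_k[q̃_k]_i = 0, with numerical entropy flux q̃ = ⟨V⟩^T F̃ − (J ξ_{k,t})⟨φ⟩ − Σ_l (J ξ_{k,x_l})⟨ψ_l⟩. -/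
/-- Discrete entropy identity for an EC flux: if the two-point flux `F̃` satisfies
`⟦V⟧·F̃ = c⟦φ⟧ + d⟦ψ⟧` at each interface (interface `i+1/2` is indexed by `i`),
then `V_i·(F̃_{i+1/2} − F̃_{i−1/2}) − φ_i(c_{i+1/2}−c_{i−1/2}) − ψ_i(d_{i+1/2}−d_{i−1/2})
 = q̃_{i+1/2} − q̃_{i−1/2}` with
`q̃ = ⟨V⟩·F̃ − c⟨φ⟩ − d⟨ψ⟩`. -/
theorem discrete_entropy_identity (n : ℕ)
    (V : ℤ → Fin n → ℝ) (F : ℤ → Fin n → ℝ)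
    (φ ψ : ℤ → ℝ) (c d : ℤ → ℝ)
    (hEC : ∀ i : ℤ, (∑ j, (V (i + 1) j - V i j) * F i j)
        = c i * (φ (i + 1) - φ i) + d i * (ψ (i + 1) - ψ i)) :
    ∀ i : ℤ,
      let q : ℤ → ℝ := fun i =>
        (∑ j, ((V (i + 1) j + V i j) / 2) * F i j)
          - c i * ((φ (i + 1) + φ i) / 2) - d i * ((ψ (i + 1) + ψ i) / 2)
      (∑ j, V i j * (F i j - F (i - 1) j))
        - φ i * (c i - c (i - 1)) - ψ i * (d i - d (i - 1))
        = q i - q (i - 1) := by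
  intro i q
  have h1 := hEC i
  have h2 := hEC (i - 1)
  have hi : i - 1 + 1 = i := by ring
  rw [hi] at h2
  have e0 : (∑ j, V i j * (F i j - F (i - 1) j))
      = (∑ j, V i j * F i j) - (∑ j, V i j * F (i - 1) j) := by
    rw [← Finset.sum_sub_distrib]; congr 1; ext j; ring
  have e1 : (∑ j, ((V (i + 1) j + V i j) / 2) * F i j)
      = (∑ j, (V (i + 1) j - V i j) * F i j) / 2 + (∑ j, V i j * F i j) := by
    rw [Finset.sum_div, ← Finset.sum_add_distrib]; congr 1; ext j; ring
  have e2 : (∑ j, ((V i j + V (i - 1) j) / 2) * F (i - 1) j)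
      = (∑ j, V i j * F (i - 1) j)
        - (∑ j, (V i j - V (i - 1) j) * F (i - 1) j) / 2 := by
    rw [Finset.sum_div, ← Finset.sum_sub_distrib]; congr 1; ext j
    ring
  simp only [q, e1, e2, e0, hi]
  linear_combination -h1/2 - h2/2
end

section
/- The discrete surface conservation law holds for the conservative-metrics discretization: since the commutator of the central difference operators in different index directions vanishes (δ_l δ_k = δ_k δ_l), the quantity Σ_{k=1}^{3} (1/Δξ_k) δ_k[Jξ_{k,x₁}]_i vanishes identically when the interface metrics are defined by the prescribed nested difference/average formulas. -/
/-- Discrete surface conservation law for the conservative-metrics discretization: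
with the interface metrics defined by the nested difference/average formulas, the
discrete divergence `Σ_k (1/Δξ_k) δ_k[Jξ_{k,x₁}]` vanishes identically. -/
theorem discrete_SCL (Δ1 Δ2 Δ3 : ℝ) (h1 : 0 < Δ1) (h2 : 0 < Δ2) (h3 : 0 < Δ3)
    (x2 x3 : ℤ × ℤ × ℤ → ℝ) :
    let d1 : (ℤ × ℤ × ℤ → ℝ) → ℤ × ℤ × ℤ → ℝ :=
      fun f p => f (p.1 + 1, p.2.1, p.2.2) - f p
    let d2 : (ℤ × ℤ × ℤ → ℝ) → ℤ × ℤ × ℤ → ℝ :=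
      fun f p => f (p.1, p.2.1 + 1, p.2.2) - f p
    let d3 : (ℤ × ℤ × ℤ → ℝ) → ℤ × ℤ × ℤ → ℝ :=
      fun f p => f (p.1, p.2.1, p.2.2 + 1) - f p
    let a1 : (ℤ × ℤ × ℤ → ℝ) → ℤ × ℤ × ℤ → ℝ :=
      fun f p => (f (p.1 + 1, p.2.1, p.2.2) + f p) / 2
    let a2 : (ℤ × ℤ × ℤ → ℝ) → ℤ × ℤ × ℤ → ℝ :=
      fun f p => (f (p.1, p.2.1 + 1, p.2.2) + f p) / 2
    let a3 : (ℤ × ℤ × ℤ → ℝ) → ℤ × ℤ × ℤ → ℝ :=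
      fun f p => (f (p.1, p.2.1, p.2.2 + 1) + f p) / 2
    let m1 : ℤ × ℤ × ℤ → ℝ := fun p =>
      (1 / (Δ2 * Δ3)) * (d3 (fun q => d2 x2 q * a2 x3 q) p - d2 (fun q => d3 x2 q * a3 x3 q) p)
    let m2 : ℤ × ℤ × ℤ → ℝ := fun p =>
      (1 / (Δ3 * Δ1)) * (d1 (fun q => d3 x2 q * a3 x3 q) p - d3 (fun q => d1 x2 q * a1 x3 q) p)
    let m3 : ℤ × ℤ × ℤ → ℝ := fun p =>
      (1 / (Δ1 * Δ2)) * (d2 (fun q => d1 x2 q * a1 x3 q) p - d1 (fun q => d2 x2 q * a2 x3 q) p)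
    ∀ p : ℤ × ℤ × ℤ,
      (1 / Δ1) * d1 m1 p + (1 / Δ2) * d2 m2 p + (1 / Δ3) * d3 m3 p = 0 := by
  intro d1 d2 d3 a1 a2 a3 m1 m2 m3 p
  simp only [d1, d2, d3, a1, a2, a3, m1, m2, m3]
  field_simp
  ring
end

section
/- The entropy flux condition holds for special RHD: the gradient of q_k(U) = η(U)v_k equals η'(U) F_k'(U), i.e., (η, q_k) is an entropy pair for the flux F_k, for smooth states with ρ, p > 0, |v| < 1. -/
/-!
Write the conserved variables as `U = (D, m, E)` with `D = ρW`, `m = ρhW²v`, `E = ρhW² - p`.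
Then `F_k = U v_k + p (0, e_k, v_k)`, so for any covector `V` the product rule gives
`V · dF_k = v_k (V · dU) + (V · U) dv_k + (V_{m,k} + V_E v_k) dp + p V_E dv_k`.
For the entropy variables `V` one has `V · dU = dη` (that is, `V = η'(U)`), `V · U = η + D`,
`V_{m,k} = -V_E v_k` and `p V_E = -D`, so the right-hand side is `v_k dη + η dv_k = dq_k`.
The first two identities are checked by differentiating in the primitive variables,
using `W² (1 - |v|²) = 1`.
-/

open ContinuousLinearMap

namespace SpecialRHD

abbrev PrimitiveState (d : ℕ) : Type := ℝ × (Fin d → ℝ) × ℝ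

noncomputable section

variable {d : ℕ}

def lorentz (y : PrimitiveState d) : ℝ := 1 / √(1 - ∑ i, y.2.1 i ^ 2)

def enthalpy (Γ : ℝ) (y : PrimitiveState d) : ℝ := 1 + Γ * y.2.2 / ((Γ - 1) * y.1)

def specificEntropy (Γ : ℝ) (y : PrimitiveState d) : ℝ := Real.log (y.2.2 / y.1 ^ Γ)

def density (y : PrimitiveState d) : ℝ := y.1 * lorentz y

def entropy (Γ : ℝ) (y : PrimitiveState d) : ℝ := -(density y * specificEntropy Γ y) / (Γ - 1)

def lorentzEnthalpy (Γ : ℝ) (y : PrimitiveState d) : ℝ := y.1 * enthalpy Γ y * lorentz y ^ 2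

def momentum (Γ : ℝ) (i : Fin d) (y : PrimitiveState d) : ℝ := lorentzEnthalpy Γ y * y.2.1 i

def energy (Γ : ℝ) (y : PrimitiveState d) : ℝ := lorentzEnthalpy Γ y - y.2.2

def entropyVarDensity (Γ : ℝ) (z : PrimitiveState d) : ℝ :=
  (Γ - specificEntropy Γ z) / (Γ - 1) + z.1 / z.2.2

def entropyVarMomentum (z : PrimitiveState d) (i : Fin d) : ℝ := z.1 * lorentz z * z.2.1 i / z.2.2

def entropyVarEnergy (z : PrimitiveState d) : ℝ := -(z.1 * lorentz z) / z.2.2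

theorem fderiv_mul_apply {E : Type*} [NormedAddCommGroup E] [NormedSpace ℝ E] {f g : E → ℝ}
    {x : E} (hf : DifferentiableAt ℝ f x) (hg : DifferentiableAt ℝ g x) (w : E) :
    fderiv ℝ (fun y => f y * g y) x w = f x * fderiv ℝ g x w + g x * fderiv ℝ f x w := by
  simp [fderiv_fun_mul hf hg]

variable {Γ : ℝ} {z : PrimitiveState d}

theorem hasFDerivAt_velocity (i : Fin d) :
    HasFDerivAt (fun y : PrimitiveState d => y.2.1 i)
      ((proj i).comp ((fst ℝ (Fin d → ℝ) ℝ).comp (snd ℝ ℝ ((Fin d → ℝ) × ℝ)))) z :=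
  (proj i : (Fin d → ℝ) →L[ℝ] ℝ).hasFDerivAt.comp z hasFDerivAt_snd.fst

theorem fderiv_rho_apply (w : PrimitiveState d) :
    fderiv ℝ (fun y : PrimitiveState d => y.1) z w = w.1 := by
  rw [hasFDerivAt_fst.fderiv]; rfl

theorem fderiv_velocity_apply (i : Fin d) (w : PrimitiveState d) :
    fderiv ℝ (fun y : PrimitiveState d => y.2.1 i) z w = w.2.1 i := by
  rw [(hasFDerivAt_velocity i).fderiv]; rfl

theorem fderiv_pressure_apply (w : PrimitiveState d) :
    fderiv ℝ (fun y : PrimitiveState d => y.2.2) z w = w.2.2 := by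
  rw [hasFDerivAt_snd.snd.fderiv]; rfl

theorem fderiv_mul_velocity_apply {f : PrimitiveState d → ℝ} (hf : DifferentiableAt ℝ f z)
    (k : Fin d) (w : PrimitiveState d) :
    fderiv ℝ (fun y => f y * y.2.1 k) z w = fderiv ℝ f z w * z.2.1 k + f z * w.2.1 k := by
  rw [fderiv_mul_apply hf (hasFDerivAt_velocity k).differentiableAt, fderiv_velocity_apply]
  ring

theorem lorentz_pos (hv : ∑ i, z.2.1 i ^ 2 < 1) : 0 < lorentz z := by
  have : 0 < 1 - ∑ i, z.2.1 i ^ 2 := by linarith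
  unfold lorentz; positivity

theorem sum_sq_velocity_eq_one_sub_inv_lorentz_sq (hv : ∑ i, z.2.1 i ^ 2 < 1) :
    ∑ i, z.2.1 i ^ 2 = 1 - (lorentz z ^ 2)⁻¹ := by
  rw [lorentz, div_pow, Real.sq_sqrt (by linarith), one_pow, one_div, inv_inv]; ring

theorem differentiableAt_lorentz (hv : ∑ i, z.2.1 i ^ 2 < 1) : DifferentiableAt ℝ lorentz z := by
  have hpos : 1 - ∑ i, z.2.1 i ^ 2 ≠ 0 := by linarith
  have hsqrt : √(1 - ∑ i, z.2.1 i ^ 2) ≠ 0 := by positivity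
  unfold lorentz
  fun_prop (disch := assumption)

theorem fderiv_lorentz_apply (hv : ∑ i, z.2.1 i ^ 2 < 1) (w : PrimitiveState d) :
    fderiv ℝ lorentz z w = lorentz z ^ 3 * ∑ i, z.2.1 i * w.2.1 i := by
  have hpos : 0 < 1 - ∑ i, z.2.1 i ^ 2 := by linarith
  have hsum := HasFDerivAt.fun_sum (u := Finset.univ) fun i _ =>
    (hasFDerivAt_velocity (z := z) i).pow 2
  have hinv := (Real.hasDerivAt_sqrt hpos.ne').inv (Real.sqrt_pos.2 hpos).ne'
  have h := (hinv.comp_hasFDerivAt z (hsum.const_sub 1)).congr_of_eventuallyEq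
    (Filter.Eventually.of_forall fun y => by simp [lorentz] : lorentz =ᶠ[nhds z] _)
  have hsum_mul : ∑ i, 2 * z.2.1 i * w.2.1 i = 2 * ∑ i, z.2.1 i * w.2.1 i := by
    rw [Finset.mul_sum]; exact Finset.sum_congr rfl fun i _ => mul_assoc _ _ _
  rw [h.fderiv]
  simp [lorentz, hsum_mul]
  field_simp

theorem differentiableAt_enthalpy (hΓ : Γ ≠ 1) (hρ : z.1 ≠ 0) :
    DifferentiableAt ℝ (enthalpy Γ) z := by
  have : (Γ - 1) * z.1 ≠ 0 := mul_ne_zero (sub_ne_zero.2 hΓ) hρ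
  unfold enthalpy
  fun_prop (disch := exact this)

theorem fderiv_enthalpy_apply (hΓ : Γ ≠ 1) (hρ : z.1 ≠ 0) (w : PrimitiveState d) :
    fderiv ℝ (enthalpy Γ) z w = Γ / (Γ - 1) * (w.2.2 / z.1 - z.2.2 * w.1 / z.1 ^ 2) := by
  have h := ((hasFDerivAt_snd.snd.mul ((hasDerivAt_inv hρ).comp_hasFDerivAt z
    (hasFDerivAt_fst (𝕜 := ℝ) (p := z)))).const_mul (Γ / (Γ - 1))).const_add 1
  have h' := h.congr_of_eventuallyEq (Filter.Eventually.of_forall fun y => by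
    simp only [enthalpy, Pi.mul_apply, Function.comp_apply, ← div_eq_mul_inv, div_mul_div_comm] :
      enthalpy Γ =ᶠ[nhds z] _)
  have : Γ - 1 ≠ 0 := sub_ne_zero.2 hΓ
  rw [h'.fderiv]
  simp
  field_simp
  ring

theorem specificEntropy_eventuallyEq_log_sub (hρ : 0 < z.1) (hp : 0 < z.2.2) :
    specificEntropy Γ =ᶠ[nhds z] fun y => Real.log y.2.2 - Γ * Real.log y.1 := by
  have hopen : IsOpen {y : PrimitiveState d | 0 < y.1 ∧ 0 < y.2.2} :=
    (isOpen_lt continuous_const continuous_fst).inter (isOpen_lt continuous_const continuous_snd.snd)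
  filter_upwards [hopen.mem_nhds ⟨hρ, hp⟩] with y ⟨hyρ, hyp⟩
  rw [specificEntropy, Real.log_div hyp.ne' (Real.rpow_pos_of_pos hyρ Γ).ne', Real.log_rpow hyρ]

theorem differentiableAt_specificEntropy (hρ : 0 < z.1) (hp : 0 < z.2.2) :
    DifferentiableAt ℝ (specificEntropy Γ) z := by
  have hρ' := hρ.ne'
  have hp' := hp.ne'
  refine DifferentiableAt.congr_of_eventuallyEq ?_ (specificEntropy_eventuallyEq_log_sub hρ hp)
  fun_prop (disch := assumption)

theorem fderiv_specificEntropy_apply (hρ : 0 < z.1) (hp : 0 < z.2.2) (w : PrimitiveState d) :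
    fderiv ℝ (specificEntropy Γ) z w = w.2.2 / z.2.2 - Γ * w.1 / z.1 := by
  have h := ((Real.hasDerivAt_log hp.ne').comp_hasFDerivAt z hasFDerivAt_snd.snd).sub
    (((Real.hasDerivAt_log hρ.ne').comp_hasFDerivAt z
      (hasFDerivAt_fst (𝕜 := ℝ) (p := z))).const_mul Γ)
  rw [(h.congr_of_eventuallyEq (specificEntropy_eventuallyEq_log_sub hρ hp)).fderiv]
  simp
  field_simp

theorem differentiableAt_density (hv : ∑ i, z.2.1 i ^ 2 < 1) : DifferentiableAt ℝ density z :=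
  differentiableAt_fst.mul (differentiableAt_lorentz hv)

theorem fderiv_density_apply (hv : ∑ i, z.2.1 i ^ 2 < 1) (w : PrimitiveState d) :
    fderiv ℝ density z w = w.1 * lorentz z + z.1 * fderiv ℝ lorentz z w := by
  rw [show (density : PrimitiveState d → ℝ) = fun y => y.1 * lorentz y from rfl,
    fderiv_mul_apply differentiableAt_fst (differentiableAt_lorentz hv), fderiv_rho_apply]
  ring

theorem differentiableAt_entropy (hρ : 0 < z.1) (hp : 0 < z.2.2) (hv : ∑ i, z.2.1 i ^ 2 < 1) :
    DifferentiableAt ℝ (entropy Γ) z := by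
  have hD := differentiableAt_density hv
  have hs := differentiableAt_specificEntropy (Γ := Γ) hρ hp
  unfold entropy
  fun_prop

theorem fderiv_entropy_apply (hρ : 0 < z.1) (hp : 0 < z.2.2) (hv : ∑ i, z.2.1 i ^ 2 < 1)
    (w : PrimitiveState d) :
    fderiv ℝ (entropy Γ) z w =
      -(fderiv ℝ density z w * specificEntropy Γ z + density z * fderiv ℝ (specificEntropy Γ) z w)
        / (Γ - 1) := by
  have hD := differentiableAt_density hv
  have hs := differentiableAt_specificEntropy (Γ := Γ) hρ hp
  rw [show entropy Γ = fun y => -(density y * specificEntropy Γ y) * (Γ - 1)⁻¹ by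
      funext y; rw [← div_eq_mul_inv]; rfl,
    fderiv_mul_const (by fun_prop), fderiv_fun_neg]
  simp [fderiv_mul_apply hD hs]
  ring

theorem differentiableAt_lorentzEnthalpy (hΓ : Γ ≠ 1) (hρ : z.1 ≠ 0)
    (hv : ∑ i, z.2.1 i ^ 2 < 1) : DifferentiableAt ℝ (lorentzEnthalpy Γ) z := by
  have hW := differentiableAt_lorentz hv
  have hh := differentiableAt_enthalpy hΓ hρ
  unfold lorentzEnthalpy
  fun_prop

theorem fderiv_lorentzEnthalpy_apply (hΓ : Γ ≠ 1) (hρ : z.1 ≠ 0) (hv : ∑ i, z.2.1 i ^ 2 < 1)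
    (w : PrimitiveState d) :
    fderiv ℝ (lorentzEnthalpy Γ) z w =
      (w.1 * enthalpy Γ z + z.1 * fderiv ℝ (enthalpy Γ) z w) * lorentz z ^ 2
        + z.1 * enthalpy Γ z * (2 * lorentz z * fderiv ℝ lorentz z w) := by
  have hW := differentiableAt_lorentz hv
  have hh := differentiableAt_enthalpy hΓ hρ
  rw [show lorentzEnthalpy Γ = fun y => y.1 * enthalpy Γ y * lorentz y ^ 2 from rfl,
    fderiv_mul_apply (by fun_prop) (by fun_prop), fderiv_mul_apply (by fun_prop) hh,
    fderiv_fun_pow 2 hW, fderiv_rho_apply]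
  simp
  ring

theorem differentiableAt_momentum (hΓ : Γ ≠ 1) (hρ : z.1 ≠ 0) (hv : ∑ i, z.2.1 i ^ 2 < 1)
    (i : Fin d) : DifferentiableAt ℝ (momentum Γ i) z :=
  (differentiableAt_lorentzEnthalpy hΓ hρ hv).mul (hasFDerivAt_velocity i).differentiableAt

theorem fderiv_momentum_apply (hΓ : Γ ≠ 1) (hρ : z.1 ≠ 0) (hv : ∑ i, z.2.1 i ^ 2 < 1) (i : Fin d)
    (w : PrimitiveState d) :
    fderiv ℝ (momentum Γ i) z w =
      fderiv ℝ (lorentzEnthalpy Γ) z w * z.2.1 i + lorentzEnthalpy Γ z * w.2.1 i :=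
  fderiv_mul_velocity_apply (differentiableAt_lorentzEnthalpy hΓ hρ hv) i w

theorem differentiableAt_energy (hΓ : Γ ≠ 1) (hρ : z.1 ≠ 0) (hv : ∑ i, z.2.1 i ^ 2 < 1) :
    DifferentiableAt ℝ (energy Γ) z :=
  (differentiableAt_lorentzEnthalpy hΓ hρ hv).sub differentiableAt_snd.snd

theorem fderiv_energy_apply (hΓ : Γ ≠ 1) (hρ : z.1 ≠ 0) (hv : ∑ i, z.2.1 i ^ 2 < 1)
    (w : PrimitiveState d) :
    fderiv ℝ (energy Γ) z w = fderiv ℝ (lorentzEnthalpy Γ) z w - w.2.2 := by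
  rw [show energy Γ = fun y => lorentzEnthalpy Γ y - y.2.2 from rfl,
    fderiv_fun_sub (differentiableAt_lorentzEnthalpy hΓ hρ hv) differentiableAt_snd.snd,
    sub_apply, fderiv_pressure_apply]

theorem fderiv_momentumFlux_apply (hΓ : Γ ≠ 1) (hρ : z.1 ≠ 0) (hv : ∑ i, z.2.1 i ^ 2 < 1)
    (i k : Fin d) (w : PrimitiveState d) :
    fderiv ℝ (fun y => momentum Γ i y * y.2.1 k + y.2.2 * if i = k then 1 else 0) z w
      = fderiv ℝ (momentum Γ i) z w * z.2.1 k + momentum Γ i z * w.2.1 k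
        + w.2.2 * if i = k then 1 else 0 := by
  have hm := differentiableAt_momentum hΓ hρ hv i
  rw [fderiv_fun_add (by fun_prop) (by fun_prop), add_apply, fderiv_mul_velocity_apply hm,
    fderiv_mul_const differentiableAt_snd.snd, smul_apply, fderiv_pressure_apply, smul_eq_mul,
    mul_comm (ite _ _ _)]

theorem fderiv_energyFlux_apply (hΓ : Γ ≠ 1) (hρ : z.1 ≠ 0) (hv : ∑ i, z.2.1 i ^ 2 < 1)
    (k : Fin d) (w : PrimitiveState d) :
    fderiv ℝ (momentum Γ k) z w
      = (fderiv ℝ (energy Γ) z w + w.2.2) * z.2.1 k + (energy Γ z + z.2.2) * w.2.1 k := by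
  have hE := differentiableAt_energy hΓ hρ hv
  rw [show momentum Γ k = fun y => (energy Γ y + y.2.2) * y.2.1 k by
      funext y; simp only [momentum, energy, sub_add_cancel],
    fderiv_mul_velocity_apply (hE.fun_add differentiableAt_snd.snd),
    fderiv_fun_add hE differentiableAt_snd.snd, add_apply, fderiv_pressure_apply]

theorem entropyVars_dot_fderiv_conserved_eq_fderiv_entropy (hΓ : Γ ≠ 1) (hρ : 0 < z.1)
    (hp : 0 < z.2.2) (hv : ∑ i, z.2.1 i ^ 2 < 1) (w : PrimitiveState d) :
    entropyVarDensity Γ z * fderiv ℝ density z w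
        + ∑ i, entropyVarMomentum z i * fderiv ℝ (momentum Γ i) z w
        + entropyVarEnergy z * fderiv ℝ (energy Γ) z w
      = fderiv ℝ (entropy Γ) z w := by
  have hsum : ∑ i, entropyVarMomentum z i * fderiv ℝ (momentum Γ i) z w
      = z.1 * lorentz z / z.2.2 * (fderiv ℝ (lorentzEnthalpy Γ) z w * ∑ i, z.2.1 i ^ 2
          + lorentzEnthalpy Γ z * ∑ i, z.2.1 i * w.2.1 i) := by
    simp only [fderiv_momentum_apply hΓ hρ.ne' hv, entropyVarMomentum, mul_add, Finset.mul_sum,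
      ← Finset.sum_add_distrib]
    exact Finset.sum_congr rfl fun i _ => by ring
  have hW := lorentz_pos hv
  have hΓ' : Γ - 1 ≠ 0 := sub_ne_zero.2 hΓ
  rw [hsum, fderiv_energy_apply hΓ hρ.ne' hv, fderiv_entropy_apply hρ hp hv,
    fderiv_lorentzEnthalpy_apply hΓ hρ.ne' hv, fderiv_density_apply hv, fderiv_lorentz_apply hv,
    fderiv_enthalpy_apply hΓ hρ.ne', fderiv_specificEntropy_apply hρ hp,
    sum_sq_velocity_eq_one_sub_inv_lorentz_sq hv]
  simp only [entropyVarDensity, entropyVarEnergy, lorentzEnthalpy, enthalpy, density]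
  field_simp
  ring

theorem entropyVars_dot_conserved_eq_entropy_add_density (hΓ : Γ ≠ 1) (hρ : 0 < z.1)
    (hp : 0 < z.2.2) (hv : ∑ i, z.2.1 i ^ 2 < 1) :
    entropyVarDensity Γ z * density z + ∑ i, entropyVarMomentum z i * momentum Γ i z
        + entropyVarEnergy z * energy Γ z
      = entropy Γ z + density z := by
  have hsum : ∑ i, entropyVarMomentum z i * momentum Γ i z
      = z.1 * lorentz z / z.2.2 * lorentzEnthalpy Γ z * ∑ i, z.2.1 i ^ 2 := by
    simp only [entropyVarMomentum, momentum, Finset.mul_sum]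
    exact Finset.sum_congr rfl fun i _ => by ring
  have hW := lorentz_pos hv
  have hΓ' : Γ - 1 ≠ 0 := sub_ne_zero.2 hΓ
  rw [hsum, sum_sq_velocity_eq_one_sub_inv_lorentz_sq hv]
  simp only [entropyVarDensity, entropyVarEnergy, energy, lorentzEnthalpy, enthalpy, density,
    entropy]
  field_simp
  ring

theorem entropyVarMomentum_add_entropyVarEnergy_mul (k : Fin d) :
    entropyVarMomentum z k + entropyVarEnergy z * z.2.1 k = 0 := by
  simp only [entropyVarMomentum, entropyVarEnergy]; ring

theorem pressure_mul_entropyVarEnergy (hp : 0 < z.2.2) :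
    z.2.2 * entropyVarEnergy z = -density z := by
  simp only [entropyVarEnergy, density]; field_simp

theorem sum_entropyVarMomentum_mul_fderiv_momentumFlux (k : Fin d) (w : PrimitiveState d) :
    ∑ i, entropyVarMomentum z i * (fderiv ℝ (momentum Γ i) z w * z.2.1 k
        + momentum Γ i z * w.2.1 k + w.2.2 * if i = k then 1 else 0)
      = z.2.1 k * ∑ i, entropyVarMomentum z i * fderiv ℝ (momentum Γ i) z w
        + w.2.1 k * ∑ i, entropyVarMomentum z i * momentum Γ i z
        + entropyVarMomentum z k * w.2.2 := by
  simp only [mul_add, Finset.sum_add_distrib, Finset.mul_sum, mul_ite, mul_one, mul_zero,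
    Finset.sum_ite_eq', Finset.mem_univ, if_true]
  congr 1; congr 1 <;> exact Finset.sum_congr rfl fun i _ => by ring

end

end SpecialRHD

open SpecialRHD in
theorem rhd_entropy_flux_compatibility_general (d : ℕ) (Γ : ℝ) (hΓ1 : 1 < Γ)
    (k : Fin d) (z : ℝ × (Fin d → ℝ) × ℝ)
    (hρ : 0 < z.1) (hp : 0 < z.2.2) (hv : ∑ i, z.2.1 i ^ 2 < 1) :
    let Wf : ℝ × (Fin d → ℝ) × ℝ → ℝ := fun y => 1 / Real.sqrt (1 - ∑ i, y.2.1 i ^ 2)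
    let hf : ℝ × (Fin d → ℝ) × ℝ → ℝ := fun y => 1 + Γ * y.2.2 / ((Γ - 1) * y.1)
    let sf : ℝ × (Fin d → ℝ) × ℝ → ℝ := fun y => Real.log (y.2.2 / y.1 ^ Γ)
    let ηf : ℝ × (Fin d → ℝ) × ℝ → ℝ := fun y => -(y.1 * Wf y * sf y) / (Γ - 1)
    -- entropy flux q_k = η v_k
    let qf : ℝ × (Fin d → ℝ) × ℝ → ℝ := fun y => ηf y * y.2.1 k
    -- flux components: mass, momentum (i = 1..d), energy
    let F0 : ℝ × (Fin d → ℝ) × ℝ → ℝ := fun y => y.1 * Wf y * y.2.1 k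
    let Fm : Fin d → ℝ × (Fin d → ℝ) × ℝ → ℝ := fun i y =>
      y.1 * hf y * (Wf y) ^ 2 * y.2.1 i * y.2.1 k + y.2.2 * (if i = k then 1 else 0)
    let FE : ℝ × (Fin d → ℝ) × ℝ → ℝ := fun y => y.1 * hf y * (Wf y) ^ 2 * y.2.1 k
    -- entropy variables V = η'(U)
    let V0 : ℝ := (Γ - sf z) / (Γ - 1) + z.1 / z.2.2
    let Vm : Fin d → ℝ := fun i => z.1 * Wf z * z.2.1 i / z.2.2
    let VE : ℝ := -(z.1 * Wf z) / z.2.2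
    ∀ w : ℝ × (Fin d → ℝ) × ℝ,
      fderiv ℝ qf z w
        = V0 * fderiv ℝ F0 z w + (∑ i, Vm i * fderiv ℝ (Fm i) z w)
          + VE * fderiv ℝ FE z w := by
  intro _ _ _ _ _ _ _ _ _ _ _ w
  have hΓ : Γ ≠ 1 := hΓ1.ne'
  show fderiv ℝ (fun y => entropy Γ y * y.2.1 k) z w
    = entropyVarDensity Γ z * fderiv ℝ (fun y => density y * y.2.1 k) z w
      + ∑ i, entropyVarMomentum z i
          * fderiv ℝ (fun y => momentum Γ i y * y.2.1 k + y.2.2 * if i = k then 1 else 0) z w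
      + entropyVarEnergy z * fderiv ℝ (momentum Γ k) z w
  rw [fderiv_mul_velocity_apply (differentiableAt_entropy hρ hp hv),
    fderiv_mul_velocity_apply (differentiableAt_density hv),
    Finset.sum_congr rfl fun i _ => by rw [fderiv_momentumFlux_apply hΓ hρ.ne' hv],
    sum_entropyVarMomentum_mul_fderiv_momentumFlux, fderiv_energyFlux_apply hΓ hρ.ne' hv]
  linear_combination -z.2.1 k * entropyVars_dot_fderiv_conserved_eq_fderiv_entropy hΓ hρ hp hv w
    - w.2.1 k * entropyVars_dot_conserved_eq_entropy_add_density hΓ hρ hp hv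
    - w.2.1 k * pressure_mul_entropyVarEnergy hp
    - w.2.2 * entropyVarMomentum_add_entropyVarEnergy_mul k

/-- Entropy flux compatibility for special RHD: viewing everything as functions
of the primitive variables `z = (ρ, v, p)`, the gradient of the entropy flux
`q_k = η v_k` equals the entropy variables `V = η'(U)` contracted with the
Jacobian of the flux `F_k`, i.e. `∇ q_k = V · ∂F_k/∂z` in every direction `w`.
The flux components are `F_k = (D v_k, (m v_k + p e_k)ᵀ, m_k)ᵀ` with
`D = ρW`, `m = ρhW²v`, and
`V = ((Γ−s)/(Γ−1) + ρ/p, ρWvᵀ/p, −ρW/p)ᵀ`, `s = ln(p/ρ^Γ)`. -/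
theorem rhd_entropy_flux_compatibility (d : ℕ) (Γ : ℝ) (hΓ1 : 1 < Γ) (hΓ2 : Γ ≤ 2)
    (k : Fin d) (z : ℝ × (Fin d → ℝ) × ℝ)
    (hρ : 0 < z.1) (hp : 0 < z.2.2) (hv : ∑ i, z.2.1 i ^ 2 < 1) :
    let Wf : ℝ × (Fin d → ℝ) × ℝ → ℝ := fun y => 1 / Real.sqrt (1 - ∑ i, y.2.1 i ^ 2)
    let hf : ℝ × (Fin d → ℝ) × ℝ → ℝ := fun y => 1 + Γ * y.2.2 / ((Γ - 1) * y.1)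
    let sf : ℝ × (Fin d → ℝ) × ℝ → ℝ := fun y => Real.log (y.2.2 / y.1 ^ Γ)
    let ηf : ℝ × (Fin d → ℝ) × ℝ → ℝ := fun y => -(y.1 * Wf y * sf y) / (Γ - 1)
    -- entropy flux q_k = η v_k
    let qf : ℝ × (Fin d → ℝ) × ℝ → ℝ := fun y => ηf y * y.2.1 k
    -- flux components: mass, momentum (i = 1..d), energy
    let F0 : ℝ × (Fin d → ℝ) × ℝ → ℝ := fun y => y.1 * Wf y * y.2.1 k
    let Fm : Fin d → ℝ × (Fin d → ℝ) × ℝ → ℝ := fun i y =>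
      y.1 * hf y * (Wf y) ^ 2 * y.2.1 i * y.2.1 k + y.2.2 * (if i = k then 1 else 0)
    let FE : ℝ × (Fin d → ℝ) × ℝ → ℝ := fun y => y.1 * hf y * (Wf y) ^ 2 * y.2.1 k
    -- entropy variables V = η'(U)
    let V0 : ℝ := (Γ - sf z) / (Γ - 1) + z.1 / z.2.2
    let Vm : Fin d → ℝ := fun i => z.1 * Wf z * z.2.1 i / z.2.2
    let VE : ℝ := -(z.1 * Wf z) / z.2.2
    ∀ w : ℝ × (Fin d → ℝ) × ℝ,
      fderiv ℝ qf z w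
        = V0 * fderiv ℝ F0 z w + (∑ i, Vm i * fderiv ℝ (Fm i) z w)
          + VE * fderiv ℝ FE z w :=
  rhd_entropy_flux_compatibility_general d Γ hΓ1 k z hρ hp hv
end
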